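/- arXiv:2407.18660 — 8 statements merged into one kernel-verified Lean document; each statement's English description precedes it below -/
import Mathlib

section
/- Let U be a real or complex Banach space, and let (x_n)_{n∈ℕ} and (y_n)_{n∈ℕ} be sequences in U with closed linear spans X and Y, respectively. Suppose that: (i) there are bounded linear projections P, Q : U → U with range X and Y respectively; (ii) there is a continuous linear isomorphism T : X → Y (with continuous inverse) satisfying T(x_n) = y_n for all n; and (iii) the quotient Banach spaces U/X and U/Y are isomorphic as topological vector spaces. Then (x_n) and (y_n) are congruent; moreover, one can choose a bicontinuous linear automorphism J of U such that J(x) = T(x) for every x ∈ X and T(P(u)) = Q(J(u)) for every u ∈ U (in particular J(x_n) = y_n for all n). -/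
/-!
A continuous projection `P` with range `X` splits `U` topologically as `X × ker P`, and
`ker P ≃ U ⧸ X`. Hence the hypotheses give `U ≃ X × ker P` and `U ≃ Y × ker Q`, together with
isomorphisms `T : X ≃ Y` and `ker P ≃ U ⧸ X ≃ U ⧸ Y ≃ ker Q`; the automorphism `J` is their
product, read through the two splittings.
-/

open Submodule ContinuousLinearMap

namespace Submodule.IsTopCompl

variable {R : Type*} [Ring R]
  {M : Type*} [TopologicalSpace M] [AddCommGroup M] [Module R M] [IsTopologicalAddGroup M]
  {M' : Type*} [TopologicalSpace M'] [AddCommGroup M'] [Module R M'] [IsTopologicalAddGroup M']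
  {p q : Submodule R M} {p' q' : Submodule R M'}

noncomputable def equivOfEquivs (h : IsTopCompl p q) (h' : IsTopCompl p' q')
    (e : p ≃L[R] p') (f : q ≃L[R] q') : M ≃L[R] M' :=
  (prodEquivOfIsTopCompl p q h).symm.trans
    ((e.prodCongr f).trans (prodEquivOfIsTopCompl p' q' h'))

theorem equivOfEquivs_apply_left (h : IsTopCompl p q) (h' : IsTopCompl p' q')
    (e : p ≃L[R] p') (f : q ≃L[R] q') (x : p) :
    h.equivOfEquivs h' e f x = e x := by
  simp [equivOfEquivs, prodEquivOfIsTopCompl_symm_apply, prodEquivOfIsTopCompl_apply]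

theorem projectionOntoL_equivOfEquivs (h : IsTopCompl p q) (h' : IsTopCompl p' q')
    (e : p ≃L[R] p') (f : q ≃L[R] q') (x : M) :
    p'.projectionOntoL q' h' (h.equivOfEquivs h' e f x) = e (p.projectionOntoL q h x) := by
  simp [equivOfEquivs, prodEquivOfIsTopCompl_symm_apply, prodEquivOfIsTopCompl_apply]

end Submodule.IsTopCompl

theorem ContinuousLinearMap.IsIdempotentElem.apply_eq_projectionOntoL
    {R : Type*} [Ring R] {M : Type*} [TopologicalSpace M] [AddCommGroup M] [Module R M]
    {f : M →L[R] M} (hf : IsIdempotentElem f) (x : M) :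
    f x = f.range.projectionOntoL f.ker (IsIdempotentElem.isTopCompl hf) x :=
  congr($(IsIdempotentElem.eq_projectionL hf) x)

theorem statement0_general {𝕜 : Type*} [RCLike 𝕜] {U : Type*} [NormedAddCommGroup U]
    [NormedSpace 𝕜 U]
    (x y : ℕ → U) (X Y : Submodule 𝕜 U)
    (hX : X = (Submodule.span 𝕜 (Set.range x)).topologicalClosure)
    (P Q : U →L[𝕜] U)
    (hPproj : ∀ u, P (P u) = P u) (hQproj : ∀ u, Q (Q u) = Q u)
    (hPrange : LinearMap.range (P : U →ₗ[𝕜] U) = X) (hQrange : LinearMap.range (Q : U →ₗ[𝕜] U) = Y)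
    (T : X ≃L[𝕜] Y)
    (hT : ∀ n, ∀ h : x n ∈ X, ((T ⟨x n, h⟩ : Y) : U) = y n)
    (hquot : Nonempty ((U ⧸ X) ≃L[𝕜] (U ⧸ Y))) :
    ∃ J : U ≃L[𝕜] U,
      (∀ v : X, J (v : U) = ((T v : Y) : U)) ∧
      (∀ u : U, ∀ h : P u ∈ X, ((T ⟨P u, h⟩ : Y) : U) = Q (J u)) ∧
      (∀ n, J (x n) = y n) := by
  subst hPrange hQrange
  obtain ⟨Φ⟩ := hquot
  have hP : IsIdempotentElem P := ContinuousLinearMap.ext hPproj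
  have hQ : IsIdempotentElem Q := ContinuousLinearMap.ext hQproj
  have hPc := IsIdempotentElem.isTopCompl hP
  have hQc := IsIdempotentElem.isTopCompl hQ
  let S : P.ker ≃L[𝕜] Q.ker := (quotientEquivOfIsTopCompl _ _ hPc).symm.trans
    (Φ.trans (quotientEquivOfIsTopCompl _ _ hQc))
  let J := hPc.equivOfEquivs hQc T S
  have hJT : ∀ v : P.range, J v = T v := hPc.equivOfEquivs_apply_left hQc T S
  refine ⟨J, hJT, fun u hu => ?_, fun n => ?_⟩
  · have hPu : (⟨P u, hu⟩ : P.range) = P.range.projectionOntoL P.ker hPc u :=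
      Subtype.ext (IsIdempotentElem.apply_eq_projectionOntoL hP u)
    rw [IsIdempotentElem.apply_eq_projectionOntoL hQ,
      hPc.projectionOntoL_equivOfEquivs, hPu]
  · have hxn : x n ∈ P.range :=
      hX ▸ Submodule.le_topologicalClosure _ (Submodule.subset_span (Set.mem_range_self n))
    exact (hJT ⟨x n, hxn⟩).trans (hT n hxn)

/-- Let `U` be a real or complex Banach space, `x, y` sequences in `U` with
closed linear spans `X`, `Y`. Suppose `P, Q` are bounded linear projections of `U` onto `X`
and `Y` respectively, `T : X ≃ Y` is a continuous linear isomorphism with `T (x n) = y n`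
for all `n`, and the quotients `U ⧸ X` and `U ⧸ Y` are isomorphic as topological vector
spaces. Then `x` and `y` are congruent; moreover one can choose a bicontinuous linear
automorphism `J` of `U` extending `T` such that `T (P u) = Q (J u)` for all `u`
(in particular `J (x n) = y n` for all `n`). -/
theorem statement0 {𝕜 : Type*} [RCLike 𝕜] {U : Type*} [NormedAddCommGroup U]
    [NormedSpace 𝕜 U] [CompleteSpace U]
    (x y : ℕ → U) (X Y : Submodule 𝕜 U)
    (hX : X = (Submodule.span 𝕜 (Set.range x)).topologicalClosure)
    (hY : Y = (Submodule.span 𝕜 (Set.range y)).topologicalClosure)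
    (P Q : U →L[𝕜] U)
    (hPproj : ∀ u, P (P u) = P u) (hQproj : ∀ u, Q (Q u) = Q u)
    (hPrange : LinearMap.range (P : U →ₗ[𝕜] U) = X) (hQrange : LinearMap.range (Q : U →ₗ[𝕜] U) = Y)
    (T : X ≃L[𝕜] Y)
    (hT : ∀ n, ∀ h : x n ∈ X, ((T ⟨x n, h⟩ : Y) : U) = y n)
    (hquot : Nonempty ((U ⧸ X) ≃L[𝕜] (U ⧸ Y))) :
    ∃ J : U ≃L[𝕜] U,
      (∀ v : X, J (v : U) = ((T v : Y) : U)) ∧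
      (∀ u : U, ∀ h : P u ∈ X, ((T ⟨P u, h⟩ : Y) : U) = Q (J u)) ∧
      (∀ n, J (x n) = y n) :=
  statement0_general x y X Y hX P Q hPproj hQproj hPrange hQrange T hT hquot
end

section
/- Let U be a real or complex Banach space, let (x_n) and (y_n) be sequences in U, and let (x*_n), (y*_n) be sequences in the dual U* such that (x_n) is a complemented unconditional basic sequence with projecting functionals (x*_n), and (y_n) is a complemented unconditional basic sequence with projecting functionals (y*_n). Suppose there are scalars (λ_n) such that y*_n = λ_n · x*_n for all n, and that (x_n) and (y_n) are equivalent, i.e., there is a continuous linear isomorphism T from the closed linear span of (x_n) onto the closed linear span of (y_n) with T(x_n) = y_n for all n. Then (x_n) and (y_n) are congruent: there is a bicontinuous linear automorphism S of U with S(x_n) = y_n for all n. -/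
/-!
Both projections `P` (onto `[x_n]`) and `Q` (onto `[y_n]`) have the same kernel `K`, the
common kernel of the `x*_n`, since `y*_n` is a nonzero multiple of `x*_n`. So
`U = [x_n] ⊕ K = [y_n] ⊕ K` topologically, and `T ⊕ id_K` is the required automorphism of `U`.
-/

open Filter Topology

/-- A sequence `x` in a Banach space, together with functionals `xs` in the dual, is a
*complemented unconditional basic sequence with projecting functionals* `xs` if they are
biorthogonal, the partial-sum projections `f ↦ ∑_{n ∈ A} xs n f • x n` are uniformly bounded,
and for every `f` the series `∑ xs n f • x n` converges in norm, defining a bounded linear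
projection of the space onto the closed linear span of `x`. -/
def IsComplUncondBasicSeq (𝕜 : Type*) [RCLike 𝕜] {U : Type*} [NormedAddCommGroup U]
    [NormedSpace 𝕜 U] (x : ℕ → U) (xs : ℕ → U →L[𝕜] 𝕜) : Prop :=
  (∀ k n, xs k (x n) = if k = n then 1 else 0) ∧
  (∃ C : ℝ, ∀ (f : U) (A : Finset ℕ), ‖∑ n ∈ A, xs n f • x n‖ ≤ C * ‖f‖) ∧
  (∃ P : U →L[𝕜] U,
    (∀ f : U, Tendsto (fun m => ∑ n ∈ Finset.range m, xs n f • x n) atTop (𝓝 (P f))) ∧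
    (∀ f, P (P f) = P f) ∧
    LinearMap.range (P : U →ₗ[𝕜] U) = (Submodule.span 𝕜 (Set.range x)).topologicalClosure)

section BiorthogonalExpansion

variable {𝕜 U : Type*} [Semiring 𝕜] [TopologicalSpace 𝕜] [AddCommMonoid U]
  [TopologicalSpace U] [Module 𝕜 U] {x : ℕ → U} {xs : ℕ → U →L[𝕜] 𝕜}

theorem apply_sum_range_smul_of_biorthogonal
    (hxb : ∀ k n, xs k (x n) = if k = n then 1 else 0) (f : U) {k m : ℕ} (hkm : k < m) :
    xs k (∑ n ∈ Finset.range m, xs n f • x n) = xs k f := by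
  simp [hxb, Finset.mem_range.mpr hkm]

variable [T2Space 𝕜]

theorem apply_eq_of_tendsto_sum_range_smul
    (hxb : ∀ k n, xs k (x n) = if k = n then 1 else 0) {f p : U}
    (hp : Tendsto (fun m ↦ ∑ n ∈ Finset.range m, xs n f • x n) atTop (𝓝 p)) (k : ℕ) :
    xs k p = xs k f :=
  tendsto_nhds_unique (((xs k).continuous.tendsto p).comp hp) <| tendsto_const_nhds.congr' <|
    (eventually_gt_atTop k).mono fun _ hm ↦ (apply_sum_range_smul_of_biorthogonal hxb f hm).symm

theorem ker_eq_iInf_ker_of_tendsto_sum_range_smul [T2Space U]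
    (hxb : ∀ k n, xs k (x n) = if k = n then 1 else 0) {P : U →L[𝕜] U}
    (hP : ∀ f, Tendsto (fun m ↦ ∑ n ∈ Finset.range m, xs n f • x n) atTop (𝓝 (P f))) :
    P.ker = ⨅ n, (xs n).ker := by
  ext f
  simp only [LinearMap.mem_ker, Submodule.mem_iInf, ContinuousLinearMap.coe_coe]
  refine ⟨fun h n ↦ ?_, fun h ↦ tendsto_nhds_unique (hP f) (by simp [h])⟩
  rw [← apply_eq_of_tendsto_sum_range_smul hxb (hP f) n, h, map_zero]

end BiorthogonalExpansion

theorem Submodule.IsTopCompl.exists_continuousLinearEquiv_apply_eq {R M : Type*} [Ring R]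
    [AddCommGroup M] [TopologicalSpace M] [IsTopologicalAddGroup M] [Module R M]
    {p q r : Submodule R M} (hp : p.IsTopCompl r) (hq : q.IsTopCompl r) (T : p ≃L[R] q) :
    ∃ S : M ≃L[R] M, ∀ v : p, S v = T v := by
  refine ⟨(Submodule.prodEquivOfIsTopCompl p r hp).symm.trans <|
    (T.prodCongr (.refl R r)).trans (Submodule.prodEquivOfIsTopCompl q r hq), fun v ↦ ?_⟩
  have hv : (Submodule.prodEquivOfIsTopCompl p r hp).symm v = (v, 0) := by
    rw [ContinuousLinearEquiv.symm_apply_eq, Submodule.prodEquivOfIsTopCompl_apply]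
    simp
  simp [hv, Submodule.prodEquivOfIsTopCompl_apply]

theorem IsComplUncondBasicSeq.exists_isIdempotentElem {𝕜 U : Type*} [RCLike 𝕜]
    [NormedAddCommGroup U] [NormedSpace 𝕜 U] {x : ℕ → U} {xs : ℕ → U →L[𝕜] 𝕜}
    (hx : IsComplUncondBasicSeq 𝕜 x xs) :
    ∃ P : U →L[𝕜] U, IsIdempotentElem P ∧
      P.range = (Submodule.span 𝕜 (Set.range x)).topologicalClosure ∧
      P.ker = ⨅ n, (xs n).ker := by
  obtain ⟨hxb, -, P, hP, hPidem, hPrange⟩ := hx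
  exact ⟨P, ContinuousLinearMap.ext hPidem, hPrange,
    ker_eq_iInf_ker_of_tendsto_sum_range_smul hxb hP⟩

theorem statement1_general {𝕜 : Type*} [RCLike 𝕜] {U : Type*} [NormedAddCommGroup U]
    [NormedSpace 𝕜 U]
    (x y : ℕ → U) (xs ys : ℕ → U →L[𝕜] 𝕜) (lam : ℕ → 𝕜)
    (hx : IsComplUncondBasicSeq 𝕜 x xs) (hy : IsComplUncondBasicSeq 𝕜 y ys)
    (hlam : ∀ n, ys n = lam n • xs n)
    (X Y : Submodule 𝕜 U)
    (hX : X = (Submodule.span 𝕜 (Set.range x)).topologicalClosure)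
    (hY : Y = (Submodule.span 𝕜 (Set.range y)).topologicalClosure)
    (hequiv : ∃ T : X ≃L[𝕜] Y, ∀ n, ∀ h : x n ∈ X, ((T ⟨x n, h⟩ : Y) : U) = y n) :
    ∃ S : U ≃L[𝕜] U, ∀ n, S (x n) = y n := by
  obtain ⟨P, hPidem, hPrange, hPker⟩ := hx.exists_isIdempotentElem
  obtain ⟨Q, hQidem, hQrange, hQker⟩ := hy.exists_isIdempotentElem
  have hlam_ne_zero (n : ℕ) : lam n ≠ 0 := fun h ↦ by simpa [hlam n, h] using hy.1 n n
  have hker : Q.ker = P.ker := by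
    simp only [hQker, hPker, hlam, ContinuousLinearMap.toLinearMap_smul,
      LinearMap.ker_smul _ _ (hlam_ne_zero _)]
  have hXcompl : X.IsTopCompl P.ker := by
    rw [hX, ← hPrange]
    exact ContinuousLinearMap.IsIdempotentElem.isTopCompl hPidem
  have hYcompl : Y.IsTopCompl P.ker := by
    rw [hY, ← hQrange, ← hker]
    exact ContinuousLinearMap.IsIdempotentElem.isTopCompl hQidem
  have hxX (n : ℕ) : x n ∈ X :=
    hX ▸ Submodule.le_topologicalClosure _ (Submodule.subset_span ⟨n, rfl⟩)
  obtain ⟨T, hT⟩ := hequiv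
  obtain ⟨S, hS⟩ := hXcompl.exists_continuousLinearEquiv_apply_eq hYcompl T
  exact ⟨S, fun n ↦ (hS ⟨x n, hxX n⟩).trans (hT n (hxX n))⟩

/-- If `x` and `y` are complemented unconditional basic sequences in a Banach
space `U`, with projecting functionals `xs` and `ys` satisfying `ys n = λ n • xs n`, and if
`x` and `y` are equivalent (some continuous linear isomorphism of the closed linear spans maps
`x n` to `y n`), then `x` and `y` are congruent: some bicontinuous linear automorphism `S` of
`U` satisfies `S (x n) = y n` for all `n`. -/
theorem statement1 {𝕜 : Type*} [RCLike 𝕜] {U : Type*} [NormedAddCommGroup U]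
    [NormedSpace 𝕜 U] [CompleteSpace U]
    (x y : ℕ → U) (xs ys : ℕ → U →L[𝕜] 𝕜) (lam : ℕ → 𝕜)
    (hx : IsComplUncondBasicSeq 𝕜 x xs) (hy : IsComplUncondBasicSeq 𝕜 y ys)
    (hlam : ∀ n, ys n = lam n • xs n)
    (X Y : Submodule 𝕜 U)
    (hX : X = (Submodule.span 𝕜 (Set.range x)).topologicalClosure)
    (hY : Y = (Submodule.span 𝕜 (Set.range y)).topologicalClosure)
    (hequiv : ∃ T : X ≃L[𝕜] Y, ∀ n, ∀ h : x n ∈ X, ((T ⟨x n, h⟩ : Y) : U) = y n) :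
    ∃ S : U ≃L[𝕜] U, ∀ n, S (x n) = y n :=
  statement1_general x y xs ys lam hx hy hlam X Y hX hY hequiv
end

section
/- Let U be a real or complex Banach space, let (x_n) be a complemented unconditional basic sequence in U with projecting functionals (x*_n), and let (y_n) be a complemented unconditional basic sequence in U with projecting functionals (y*_n). If (x_n) and (y_n) are congruent (i.e., some bicontinuous linear automorphism S of U satisfies S(x_n) = y_n for all n), then there exists a bicontinuous linear automorphism T of U such that T(x_n) = y_n and y*_n ∘ T = x*_n for all n. -/
/-!
Let `P`, `Q` be the projections onto the closed spans of `x` and `y`. The automorphism `S` maps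
the range of `P` onto the range of `Q`, so `T := S - Q S + S P` agrees with `S` on the range of
`P` and with `(1 - Q) S` on its kernel; it is an automorphism with inverse
`S⁻¹ - P S⁻¹ + S⁻¹ Q`, and it satisfies `Q T = S P`. Expanding `P u = ∑ xs k u • x k` then gives
`ys n (T u) = ys n (Q (T u)) = ys n (S (P u)) = xs n u`.
-/

open Filter Topology

namespace ContinuousLinearEquiv

variable {R : Type*} [Ring R] {E F : Type*}
  [AddCommGroup E] [Module R E] [TopologicalSpace E] [IsTopologicalAddGroup E]
  [AddCommGroup F] [Module R F] [TopologicalSpace F] [IsTopologicalAddGroup F]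
  (S : E ≃L[R] F) {P : E →L[R] E} {Q : F →L[R] F}
  (hP : ∀ u, P (P u) = P u) (hQ : ∀ v, Q (Q v) = Q v)
  (hSP : ∀ u, Q (S (P u)) = S (P u)) (hSQ : ∀ v, P (S.symm (Q v)) = S.symm (Q v))

def intertwining : E ≃L[R] F :=
  equivOfInverse ((S : E →L[R] F) - Q ∘L S + S ∘L P)
    ((S.symm : F →L[R] E) - P ∘L S.symm + S.symm ∘L Q)
    (fun u => by simp [hP, hQ, hSP, hSQ])
    (fun v => by simp [hP, hQ, hSP, hSQ])

theorem intertwining_apply (u : E) :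
    S.intertwining hP hQ hSP hSQ u = S u - Q (S u) + S (P u) := rfl

theorem intertwining_apply_proj (u : E) :
    S.intertwining hP hQ hSP hSQ (P u) = S (P u) := by
  simp [intertwining_apply, hP, hSP]

theorem proj_intertwining (u : E) :
    Q (S.intertwining hP hQ hSP hSQ u) = S (P u) := by
  simp [intertwining_apply, hQ, hSP]

end ContinuousLinearEquiv

theorem ContinuousLinearMap.map_mem_topologicalClosure_span {R : Type*} [Semiring R]
    [TopologicalSpace R] {E F ι : Type*}
    [AddCommMonoid E] [Module R E] [TopologicalSpace E] [ContinuousAdd E] [ContinuousSMul R E]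
    [AddCommMonoid F] [Module R F] [TopologicalSpace F] [ContinuousAdd F] [ContinuousSMul R F]
    (f : E →L[R] F) {a : ι → E} {b : ι → F} (hf : ∀ i, f (a i) = b i) {u : E}
    (hu : u ∈ (Submodule.span R (Set.range a)).topologicalClosure) :
    f u ∈ (Submodule.span R (Set.range b)).topologicalClosure := by
  have hab : (f : E →ₗ[R] F) '' Set.range a = Set.range b := by
    rw [← Set.range_comp]; exact congrArg Set.range (funext hf)
  have := Submodule.topologicalClosure_map f _ ⟨u, hu, rfl⟩
  rwa [Submodule.map_span, hab] at this

theorem ContinuousLinearMap.proj_apply_map_proj {R : Type*} [Semiring R]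
    [TopologicalSpace R] {E F ι : Type*}
    [AddCommMonoid E] [Module R E] [TopologicalSpace E] [ContinuousAdd E] [ContinuousSMul R E]
    [AddCommMonoid F] [Module R F] [TopologicalSpace F] [ContinuousAdd F] [ContinuousSMul R F]
    {a : ι → E} {b : ι → F} {P : E →L[R] E} {Q : F →L[R] F}
    (hP : LinearMap.range (P : E →ₗ[R] E) = (Submodule.span R (Set.range a)).topologicalClosure)
    (hQ : ∀ v, Q (Q v) = Q v)
    (hQb : LinearMap.range (Q : F →ₗ[R] F) = (Submodule.span R (Set.range b)).topologicalClosure)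
    (f : E →L[R] F) (hf : ∀ i, f (a i) = b i) (u : E) : Q (f (P u)) = f (P u) := by
  refine (LinearMap.IsIdempotentElem.mem_range_iff (LinearMap.ext hQ)).1 (hQb ▸ ?_)
  exact f.map_mem_topologicalClosure_span hf (hP ▸ LinearMap.mem_range_self (P : E →ₗ[R] E) u)

theorem coord_eq_of_tendsto_partialSums {R : Type*} [Semiring R] [TopologicalSpace R]
    [T2Space R] {U : Type*} [AddCommMonoid U] [Module R U] [TopologicalSpace U]
    {x : ℕ → U} {xs : ℕ → U →L[R] R} (hxs : ∀ k n, xs k (x n) = if k = n then 1 else 0)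
    {a : ℕ → R} {v : U} (hv : Tendsto (fun m => ∑ k ∈ Finset.range m, a k • x k) atTop (𝓝 v))
    (n : ℕ) : xs n v = a n := by
  refine tendsto_nhds_unique (((xs n).continuous.tendsto v).comp hv) ?_
  refine tendsto_const_nhds.congr' ?_
  filter_upwards [eventually_gt_atTop n] with m hm
  simp [hxs, Finset.mem_range.mpr hm]

theorem statement2_general {𝕜 : Type*} [RCLike 𝕜] {U : Type*} [NormedAddCommGroup U]
    [NormedSpace 𝕜 U]
    (x y : ℕ → U) (xs ys : ℕ → U →L[𝕜] 𝕜)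
    (hx : IsComplUncondBasicSeq 𝕜 x xs) (hy : IsComplUncondBasicSeq 𝕜 y ys)
    (hcong : ∃ S : U ≃L[𝕜] U, ∀ n, S (x n) = y n) :
    ∃ T : U ≃L[𝕜] U, (∀ n, T (x n) = y n) ∧ (∀ n (u : U), ys n (T u) = xs n u) := by
  obtain ⟨hxs, -, P, hPx, hP, hPr⟩ := hx
  obtain ⟨hys, -, Q, hQy, hQ, hQr⟩ := hy
  obtain ⟨S, hS⟩ := hcong
  have hSP : ∀ u, Q (S (P u)) = S (P u) :=
    ContinuousLinearMap.proj_apply_map_proj hPr hQ hQr S hS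
  have hSQ : ∀ v, P (S.symm (Q v)) = S.symm (Q v) :=
    ContinuousLinearMap.proj_apply_map_proj hQr hP hPr S.symm
      (fun n => S.symm_apply_eq.2 (hS n).symm)
  refine ⟨S.intertwining hP hQ hSP hSQ, fun n => ?_, fun n u => ?_⟩
  · have hPxn : P (x n) = x n := by
      refine (LinearMap.IsIdempotentElem.mem_range_iff (LinearMap.ext hP)).1 (hPr ▸ ?_)
      exact Submodule.le_topologicalClosure _ (Submodule.subset_span ⟨n, rfl⟩)
    rw [← hPxn, S.intertwining_apply_proj, hPxn, hS]
  · have hSPu : Tendsto (fun m => ∑ k ∈ Finset.range m, xs k u • y k) atTop (𝓝 (S (P u))) := by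
      simpa [Function.comp_def, map_sum, hS] using ((S.continuous.tendsto _).comp (hPx u))
    calc ys n (S.intertwining hP hQ hSP hSQ u)
        = ys n (Q (S.intertwining hP hQ hSP hSQ u)) :=
          (coord_eq_of_tendsto_partialSums hys (hQy _) n).symm
      _ = xs n u := by
          rw [S.proj_intertwining]; exact coord_eq_of_tendsto_partialSums hys hSPu n

/-- Let `x` and `y` be complemented unconditional basic sequences in a Banach
space `U` with projecting functionals `xs` and `ys` respectively. If `x` and `y` are congruent
(some bicontinuous linear automorphism `S` of `U` satisfies `S (x n) = y n` for all `n`), then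
there is a bicontinuous linear automorphism `T` of `U` with `T (x n) = y n` and
`ys n ∘ T = xs n` for all `n`. -/
theorem statement2 {𝕜 : Type*} [RCLike 𝕜] {U : Type*} [NormedAddCommGroup U]
    [NormedSpace 𝕜 U] [CompleteSpace U]
    (x y : ℕ → U) (xs ys : ℕ → U →L[𝕜] 𝕜)
    (hx : IsComplUncondBasicSeq 𝕜 x xs) (hy : IsComplUncondBasicSeq 𝕜 y ys)
    (hcong : ∃ S : U ≃L[𝕜] U, ∀ n, S (x n) = y n) :
    ∃ T : U ≃L[𝕜] U, (∀ n, T (x n) = y n) ∧ (∀ n (u : U), ys n (T u) = xs n u) :=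
  statement2_general x y xs ys hx hy hcong
end

section
/- Let X be a real or complex Banach space, let (x_n) ⊂ X and (x*_n) ⊂ X* be biorthogonal (x*_k(x_n) = δ_{kn}), and let (y_n) ⊂ X satisfy ∑_{n=1}^∞ ‖y_n − x_n‖·‖x*_n‖ < 1. Suppose moreover that x*_k(y_n) = 0 for every pair (k,n) with k > n. Then there exists a sequence (y*_n) in X* biorthogonal to (y_n) (y*_k(y_n) = δ_{kn}) such that, for every n, y*_n belongs to the closure, with respect to the weak-* topology of X*, of the linear span of {x*_k : k ≥ n}. -/
/-!
Let `S = ∑ₘ xs m ⊗ (y m - x m)`, so `‖S‖ ≤ ∑ ‖y m - x m‖ ‖xs m‖ < 1` and `T = 1 + S` is invertible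
with `T (x n) = y n`. Then `ys n = xs n ∘ T⁻¹` is biorthogonal to `y`. Triangularity says that
`xs m ∘ S = ∑ⱼ xs m (y j - x j) • xs j` only involves `xs j` with `j ≥ m`, so every norm-closed
tail span `closure (span {xs k : k ≥ n})` is invariant under precomposition with `S`, hence with
`T⁻¹ = ∑ (-S)ʲ`. So `ys n` lies in the norm closure of that span, which is contained in its
weak-* closure.
-/

open ContinuousLinearMap

theorem Submodule.topologicalClosure_span_le_comap {R V : Type*} [Semiring R] [TopologicalSpace V]
    [AddCommMonoid V] [Module R V] [ContinuousConstSMul R V] [ContinuousAdd V] {s : Set V}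
    (P : V →L[R] V) (hP : ∀ v ∈ s, P v ∈ (span R s).topologicalClosure) :
    (span R s).topologicalClosure ≤ (span R s).topologicalClosure.comap P.toLinearMap :=
  topologicalClosure_minimal _ (span_le.2 hP)
    ((isClosed_topologicalClosure _).preimage P.continuous)

section GeometricSeries

variable {𝕜 E F : Type*} [NontriviallyNormedField 𝕜] [NormedAddCommGroup E] [NormedSpace 𝕜 E]
  [NormedAddCommGroup F] [NormedSpace 𝕜 F]

theorem comp_pow_mem_of_comp_mem {p : Submodule 𝕜 (E →L[𝕜] F)} {A : E →L[𝕜] E}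
    (hpA : ∀ f ∈ p, f.comp A ∈ p) {f : E →L[𝕜] F} (hf : f ∈ p) (j : ℕ) :
    f.comp (A ^ j) ∈ p := by
  induction j with
  | zero => simpa [one_def] using hf
  | succ j ih => simpa [pow_succ, mul_def, comp_assoc] using hpA _ ih

theorem comp_inv_oneSub_mem [CompleteSpace E] {p : Submodule 𝕜 (E →L[𝕜] F)}
    (hp : IsClosed (p : Set (E →L[𝕜] F))) {A : E →L[𝕜] E} (hA : ‖A‖ < 1)
    (hpA : ∀ f ∈ p, f.comp A ∈ p) {f : E →L[𝕜] F} (hf : f ∈ p) :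
    f.comp (↑(Units.oneSub A hA)⁻¹ : E →L[𝕜] E) ∈ p := by
  change compL 𝕜 E E F f (∑' j, A ^ j) ∈ p
  rw [ContinuousLinearMap.map_tsum _ (summable_geometric_of_norm_lt_one hA)]
  exact tsum_mem hp (comp_pow_mem_of_comp_mem hpA hf)

end GeometricSeries

section RankOneSeries

variable {𝕜 X : Type*} [NontriviallyNormedField 𝕜] [NormedAddCommGroup X] [NormedSpace 𝕜 X]

noncomputable def rankOneSeries (xs : ℕ → X →L[𝕜] 𝕜) (v : ℕ → X) : X →L[𝕜] X :=
  ∑' m, (xs m).smulRight (v m)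

variable {xs : ℕ → X →L[𝕜] 𝕜} {v : ℕ → X}

theorem summable_smulRight [CompleteSpace X] (h : Summable fun m => ‖v m‖ * ‖xs m‖) :
    Summable fun m => (xs m).smulRight (v m) :=
  .of_norm <| by simpa only [norm_smulRight_apply, mul_comm] using h

theorem norm_rankOneSeries_le (h : Summable fun m => ‖v m‖ * ‖xs m‖) :
    ‖rankOneSeries xs v‖ ≤ ∑' m, ‖v m‖ * ‖xs m‖ := by
  refine (norm_tsum_le_tsum_norm ?_).trans_eq ?_
  · simpa only [norm_smulRight_apply, mul_comm] using h
  · simp only [norm_smulRight_apply, mul_comm]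

theorem rankOneSeries_apply [CompleteSpace X] (h : Summable fun m => ‖v m‖ * ‖xs m‖) (z : X) :
    rankOneSeries xs v z = ∑' m, xs m z • v m :=
  (apply 𝕜 X z).map_tsum (summable_smulRight h)

theorem rankOneSeries_apply_of_biorthogonal [CompleteSpace X] {x : ℕ → X}
    (hbi : ∀ k n, xs k (x n) = if k = n then 1 else 0)
    (h : Summable fun m => ‖v m‖ * ‖xs m‖) (n : ℕ) :
    rankOneSeries xs v (x n) = v n := by
  rw [rankOneSeries_apply h, tsum_eq_single n (fun m hm => by simp [hbi, hm])]
  simp [hbi]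

theorem comp_rankOneSeries [CompleteSpace X] (h : Summable fun m => ‖v m‖ * ‖xs m‖)
    (f : X →L[𝕜] 𝕜) :
    f.comp (rankOneSeries xs v) = ∑' m, f (v m) • xs m := by
  refine ((compL 𝕜 X X 𝕜 f).map_tsum (summable_smulRight h)).trans (tsum_congr fun m => ?_)
  ext z
  simp [mul_comm]

theorem comp_rankOneSeries_mem_closure_span [CompleteSpace X]
    (h : Summable fun m => ‖v m‖ * ‖xs m‖) (htri : ∀ k n, n < k → xs k (v n) = 0)
    {m n : ℕ} (hnm : n ≤ m) :
    (xs m).comp (rankOneSeries xs v) ∈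
      (Submodule.span 𝕜 (xs '' {k | n ≤ k})).topologicalClosure := by
  rw [comp_rankOneSeries h]
  refine tsum_mem (Submodule.isClosed_topologicalClosure _) fun j => ?_
  rcases lt_or_ge j m with hj | hj
  -- `zero_smul` only matches the scalar action on `X →L[𝕜] 𝕜` up to default transparency
  · rw [htri m j hj, show (0 : 𝕜) • xs j = 0 from zero_smul 𝕜 (xs j)]
    exact Submodule.zero_mem _
  · exact Submodule.smul_mem _ _ <| Submodule.le_topologicalClosure _ <|
      Submodule.subset_span ⟨j, hnm.trans hj, rfl⟩

end RankOneSeries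

/-- Let `X` be a real or complex Banach space, `x ⊂ X` and `xs ⊂ X*`
biorthogonal, and `y ⊂ X` with `∑ ‖y n - x n‖ * ‖xs n‖ < 1`. Suppose moreover that
`xs k (y n) = 0` whenever `k > n`. Then there is a sequence `ys` in `X*` biorthogonal to `y`
such that, for every `n`, `ys n` belongs to the weak-* closure of the linear span of
`{xs k : k ≥ n}`. -/
theorem statement4 {𝕜 : Type*} [RCLike 𝕜] {X : Type*} [NormedAddCommGroup X]
    [NormedSpace 𝕜 X] [CompleteSpace X]
    (x y : ℕ → X) (xs : ℕ → X →L[𝕜] 𝕜)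
    (hbi : ∀ k n, xs k (x n) = if k = n then 1 else 0)
    (hsum : Summable fun n => ‖y n - x n‖ * ‖xs n‖)
    (hlt : ∑' n, ‖y n - x n‖ * ‖xs n‖ < 1)
    (htri : ∀ k n : ℕ, n < k → xs k (y n) = 0) :
    ∃ ys : ℕ → X →L[𝕜] 𝕜,
      (∀ k n, ys k (y n) = if k = n then 1 else 0) ∧
      (∀ n, StrongDual.toWeakDual (ys n) ∈
        closure (StrongDual.toWeakDual ''
          ((Submodule.span 𝕜 (xs '' {k | n ≤ k}) : Submodule 𝕜 (X →L[𝕜] 𝕜)) :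
            Set (X →L[𝕜] 𝕜)))) := by
  set S := rankOneSeries xs fun n => y n - x n
  have hS : ‖-S‖ < 1 := by rw [norm_neg]; exact (norm_rankOneSeries_le hsum).trans_lt hlt
  set T := Units.oneSub (-S) hS
  have hTx : ∀ n, (T : X →L[𝕜] X) (x n) = y n := fun n => by
    simp [T, S, rankOneSeries_apply_of_biorthogonal hbi hsum n]
  have hTinv : ∀ n, (↑T⁻¹ : X →L[𝕜] X) (y n) = x n := fun n => by
    rw [← hTx n]
    exact DFunLike.congr_fun T.inv_mul (x n)
  have htri' : ∀ k n, n < k → xs k (y n - x n) = 0 := fun k n hnk => by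
    simp [htri k n hnk, hbi, hnk.ne']
  have hinvariant : ∀ n, ∀ f ∈ (Submodule.span 𝕜 (xs '' {k | n ≤ k})).topologicalClosure,
      f.comp (-S) ∈ (Submodule.span 𝕜 (xs '' {k | n ≤ k})).topologicalClosure := by
    intro n f hf
    rw [comp_neg]
    refine neg_mem (Submodule.topologicalClosure_span_le_comap ((compL 𝕜 X X 𝕜).flip S) ?_ hf)
    rintro _ ⟨m, hm, rfl⟩
    exact comp_rankOneSeries_mem_closure_span hsum htri' hm
  refine ⟨fun n => (xs n).comp (↑T⁻¹ : X →L[𝕜] X), fun k n => by simp [hTinv, hbi], fun n => ?_⟩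
  have hmem : (xs n).comp (↑T⁻¹ : X →L[𝕜] X) ∈
      closure (Submodule.span 𝕜 (xs '' {k | n ≤ k}) : Set (X →L[𝕜] 𝕜)) :=
    comp_inv_oneSub_mem (Submodule.isClosed_topologicalClosure _) hS (hinvariant n)
      (Submodule.le_topologicalClosure _ (Submodule.subset_span ⟨n, le_refl n, rfl⟩))
  exact image_closure_subset_closure_image NormedSpace.Dual.toWeakDual_continuous ⟨_, hmem, rfl⟩
end

section
/- Let X be a real or complex Banach space and let (x_n) be a complemented unconditional basic sequence in X with projecting functionals (x*_n). Let (y*_n) be a sequence in X* with ∑_{n=1}^∞ ‖y*_n − x*_n‖·‖x_n‖ < 1. Then there exists a bicontinuous linear automorphism S of X such that the sequence y_n := S(x_n) (which is congruent to (x_n)) satisfies: y*_k(y_n) = δ_{kn} for all k, n; there is a constant C with ‖∑_{n∈A} y*_n(f) y_n‖ ≤ C‖f‖ for every f ∈ X and finite A ⊆ ℕ; and for every f ∈ X the series ∑_{n=1}^∞ y*_n(f) y_n converges in norm and defines a bounded linear projection of X onto the closed linear span of (y_n). That is, (y_n) is a complemented unconditional basic sequence with projecting functionals (y*_n). -/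
open Filter Topology

section

variable {𝕜 : Type*} [RCLike 𝕜] {X Y : Type*} [NormedAddCommGroup X] [NormedSpace 𝕜 X]
  [NormedAddCommGroup Y] [NormedSpace 𝕜 Y]

theorem IsComplUncondBasicSeq.map {x : ℕ → X} {xs : ℕ → X →L[𝕜] 𝕜}
    (h : IsComplUncondBasicSeq 𝕜 x xs) (S : X ≃L[𝕜] Y) :
    IsComplUncondBasicSeq 𝕜 (fun n => S (x n)) (fun n => (xs n).comp (S.symm : Y →L[𝕜] X)) := by
  obtain ⟨hbi, ⟨C, hC⟩, P, hP, hPP, hPrange⟩ := h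
  have partial_sum (f : Y) (A : Finset ℕ) :
      ∑ n ∈ A, (xs n).comp (S.symm : Y →L[𝕜] X) f • S (x n) =
        S (∑ n ∈ A, xs n (S.symm f) • x n) := by
    simp
  refine ⟨fun k n => by simpa using hbi k n, ?_, ?_⟩
  · refine ⟨‖(S : X →L[𝕜] Y)‖ * max C 0 * ‖(S.symm : Y →L[𝕜] X)‖, fun f A => ?_⟩
    rw [partial_sum]
    calc ‖S (∑ n ∈ A, xs n (S.symm f) • x n)‖
        ≤ ‖(S : X →L[𝕜] Y)‖ * ‖∑ n ∈ A, xs n (S.symm f) • x n‖ :=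
          (S : X →L[𝕜] Y).le_opNorm _
      _ ≤ ‖(S : X →L[𝕜] Y)‖ * (max C 0 * (‖(S.symm : Y →L[𝕜] X)‖ * ‖f‖)) := by
          gcongr
          exact (hC _ A).trans (mul_le_mul (le_max_left C 0) ((S.symm : Y →L[𝕜] X).le_opNorm f)
            (norm_nonneg _) (le_max_right C 0))
      _ = _ := by ring
  · refine ⟨(S : X →L[𝕜] Y) ∘L P ∘L (S.symm : Y →L[𝕜] X), fun f => ?_, fun f => ?_, ?_⟩
    · simp_rw [partial_sum]
      exact (S.continuous.tendsto _).comp (hP (S.symm f))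
    · simp [hPP]
    · have hrange : LinearMap.range
          (((S : X →L[𝕜] Y) ∘L P ∘L (S.symm : Y →L[𝕜] X)) : Y →ₗ[𝕜] Y) =
          (LinearMap.range (P : X →ₗ[𝕜] X)).map (S : X →ₗ[𝕜] Y) := by
        rw [ContinuousLinearMap.toLinearMap_comp, LinearMap.range_comp]
        exact congrArg _ (LinearMap.range_comp_of_range_eq_top _
          (LinearMap.range_eq_top.2 S.symm.surjective))
      rw [hrange, hPrange]
      apply SetLike.coe_injective
      rw [Submodule.map_coe, Submodule.topologicalClosure_coe, Submodule.topologicalClosure_coe]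
      refine (S.image_closure _).trans ?_
      rw [show (fun n => S (x n)) = S ∘ x from rfl, Set.range_comp]
      exact congrArg (closure ∘ SetLike.coe) (Submodule.span_image (S : X →ₗ[𝕜] Y)).symm

variable [CompleteSpace X]

theorem comp_tsum_smulRight_of_biorthogonal {x : ℕ → X} {xs zs : ℕ → X →L[𝕜] 𝕜}
    (hbi : ∀ k n, xs k (x n) = if k = n then 1 else 0)
    (hsum : Summable fun n => ‖zs n‖ * ‖x n‖) (k : ℕ) :
    (xs k).comp (∑' n, (zs n).smulRight (x n)) = zs k := by
  have hs : Summable fun n => (zs n).smulRight (x n) :=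
    Summable.of_norm (by simpa [ContinuousLinearMap.norm_smulRight_apply] using hsum)
  rw [← ContinuousLinearMap.compL_apply, ContinuousLinearMap.map_tsum _ hs]
  have hcomp (n : ℕ) : (xs k).comp ((zs n).smulRight (x n)) = if n = k then zs k else 0 := by
    split_ifs with h
    · subst h
      ext f
      simp [hbi]
    · ext f
      simp [hbi, Ne.symm h]
  simp [hcomp]

theorem exists_equiv_comp_eq_of_tsum_lt_one {x : ℕ → X} {xs ys : ℕ → X →L[𝕜] 𝕜}
    (hbi : ∀ k n, xs k (x n) = if k = n then 1 else 0)
    (hsum : Summable fun n => ‖ys n - xs n‖ * ‖x n‖)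
    (hlt : ∑' n, ‖ys n - xs n‖ * ‖x n‖ < 1) :
    ∃ T : X ≃L[𝕜] X, ∀ n, (xs n).comp (T : X →L[𝕜] X) = ys n := by
  have hnorm (n : ℕ) : ‖(xs n - ys n).smulRight (x n)‖ = ‖ys n - xs n‖ * ‖x n‖ := by
    rw [ContinuousLinearMap.norm_smulRight_apply, norm_sub_rev]
  set B : X →L[𝕜] X := ∑' n, (xs n - ys n).smulRight (x n)
  have hB : ‖B‖ < 1 := calc
    ‖B‖ ≤ ∑' n, ‖(xs n - ys n).smulRight (x n)‖ :=
      norm_tsum_le_tsum_norm (by simpa only [hnorm] using hsum)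
    _ = ∑' n, ‖ys n - xs n‖ * ‖x n‖ := tsum_congr hnorm
    _ < 1 := hlt
  refine ⟨.ofUnit (Units.oneSub B hB), fun k => ?_⟩
  have hBk := comp_tsum_smulRight_of_biorthogonal (zs := fun n => xs n - ys n) hbi
    (by simpa only [norm_sub_rev] using hsum) k
  show (xs k).comp (1 - B) = ys k
  rw [ContinuousLinearMap.comp_sub, ContinuousLinearMap.one_def, ContinuousLinearMap.comp_id, hBk,
    sub_sub_cancel]

end

/-- dual small perturbation principle. Let `x` be a complemented unconditional
basic sequence in a Banach space `X` with projecting functionals `xs`, and let `ys ⊂ X*`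
satisfy `∑ ‖ys n - xs n‖ * ‖x n‖ < 1`. Then there is a bicontinuous linear automorphism `S` of
`X` such that the sequence `y n := S (x n)`, which is congruent to `x`, is a complemented
unconditional basic sequence with projecting functionals `ys`. -/
theorem statement5 {𝕜 : Type*} [RCLike 𝕜] {X : Type*} [NormedAddCommGroup X]
    [NormedSpace 𝕜 X] [CompleteSpace X]
    (x : ℕ → X) (xs ys : ℕ → X →L[𝕜] 𝕜)
    (hx : IsComplUncondBasicSeq 𝕜 x xs)
    (hsum : Summable fun n => ‖ys n - xs n‖ * ‖x n‖)
    (hlt : ∑' n, ‖ys n - xs n‖ * ‖x n‖ < 1) :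
    ∃ S : X ≃L[𝕜] X, IsComplUncondBasicSeq 𝕜 (fun n => S (x n)) ys := by
  obtain ⟨T, hT⟩ := exists_equiv_comp_eq_of_tsum_lt_one hx.1 hsum hlt
  refine ⟨T.symm, ?_⟩
  simpa only [ContinuousLinearEquiv.symm_symm, hT] using hx.map T.symm
end

section
/- Let (Ω,Σ,μ) be a σ-finite measure space and F a finite Orlicz function. Let (φ_n)_{n∈ℕ} be a sequence of measurable functions with pairwise disjoint supports such that each φ_n belongs to H_F(μ) and has Luxemburg norm ‖φ_n‖_F = 1. Then (φ_n) is isometrically equivalent to the unit vector system of the Musielak–Orlicz sequence space ℓ_𝔽 with 𝔽 = (F_{φ_n})_{n∈ℕ}, where F_{φ_n}(u) = ∫_Ω F(u|φ_n|) dμ; that is, for every finitely supported scalar sequence (a_n), inf{t > 0 : ∫_Ω F(|∑_n a_n φ_n|/t) dμ ≤ 1} = inf{t > 0 : ∑_n F_{φ_n}(|a_n|/t) ≤ 1}. -/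
open MeasureTheory Set

/-- Let `(Ω, Σ, μ)` be σ-finite and `F` a finite Orlicz function. Let
`(φ n)` be a sequence of measurable functions with pairwise disjoint supports, each belonging
to `H_F(μ)` and of Luxemburg norm `1`. Then `(φ n)` is isometrically equivalent to the unit
vector system of the Musielak–Orlicz sequence space `ℓ_𝔽`, `𝔽 = (F_{φ n})`, where
`F_{φ n} (u) = ∫ F (u |φ n|) dμ`: for every finitely supported scalar sequence the Luxemburg
norm of `∑ a n • φ n` in `L_F(μ)` equals its Musielak–Orlicz sequence norm. -/
theorem statement10 {Ω : Type*} [MeasurableSpace Ω] (μ : Measure Ω) [SigmaFinite μ]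
    (F : ℝ → ℝ)
    (hFconv : ConvexOn ℝ (Ici (0:ℝ)) F) (hFmono : MonotoneOn F (Ici (0:ℝ)))
    (hF0 : F 0 = 0) (hFnonneg : ∀ t : ℝ, 0 ≤ t → 0 ≤ F t)
    (φ : ℕ → Ω → ℝ) (hmeas : ∀ n, Measurable (φ n))
    (hdisj : ∀ m n : ℕ, m ≠ n →
      Disjoint (Function.support (φ m)) (Function.support (φ n)))
    (hH : ∀ n, ∀ t : ℝ, 0 < t → Integrable (fun ω => F (t * |φ n ω|)) μ)
    (hnorm : ∀ n, sInf {t : ℝ | 0 < t ∧ ∫ ω, F (|φ n ω| / t) ∂μ ≤ 1} = 1) :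
    ∀ (A : Finset ℕ) (a : ℕ → ℝ),
      sInf {t : ℝ | 0 < t ∧ ∫ ω, F (|∑ n ∈ A, a n * φ n ω| / t) ∂μ ≤ 1}
        = sInf {t : ℝ | 0 < t ∧ ∑ n ∈ A, (∫ ω, F ((|a n| / t) * |φ n ω|) ∂μ) ≤ 1} := by

  intro A a
  have key : ∀ t : ℝ, 0 < t →
      ∫ ω, F (|∑ n ∈ A, a n * φ n ω| / t) ∂μ
        = ∑ n ∈ A, ∫ ω, F ((|a n| / t) * |φ n ω|) ∂μ := by
    intro t ht
    have hint : ∀ n ∈ A, Integrable (fun ω => F ((|a n| / t) * |φ n ω|)) μ := by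
      intro n _
      rcases eq_or_ne (a n) 0 with h | h
      · simp only [h, abs_zero, zero_div, zero_mul, hF0]
        simpa using (integrable_const (0:ℝ) (μ := μ))
      · exact hH n _ (div_pos (abs_pos.mpr h) ht)
    have hpt : ∀ ω, F (|∑ n ∈ A, a n * φ n ω| / t)
        = ∑ n ∈ A, F ((|a n| / t) * |φ n ω|) := by
      intro ω
      by_cases hex : ∃ m ∈ A, φ m ω ≠ 0
      · obtain ⟨m, hmA, hm⟩ := hex
        have hz : ∀ n ∈ A, n ≠ m → φ n ω = 0 := by
          intro n _ hnm
          by_contra hne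
          exact (Set.disjoint_left.mp (hdisj n m hnm)) hne hm
        have hsum : ∑ n ∈ A, a n * φ n ω = a m * φ m ω :=
          Finset.sum_eq_single m (fun n hn hnm => by simp [hz n hn hnm])
            (fun h => absurd hmA h)
        rw [hsum, Finset.sum_eq_single m (fun n hn hnm => by simp [hz n hn hnm, hF0])
          (fun h => absurd hmA h)]
        congr 1
        rw [abs_mul]
        ring
      · push_neg at hex
        have h0 : ∑ n ∈ A, a n * φ n ω = 0 :=
          Finset.sum_eq_zero fun n hn => by simp [hex n hn]
        rw [h0, abs_zero, zero_div, hF0]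
        exact (Finset.sum_eq_zero fun n hn => by rw [hex n hn, abs_zero, mul_zero, hF0]).symm
    simp_rw [hpt]
    exact integral_finset_sum A hint
  congr 1
  ext t
  simp only [Set.mem_setOf_eq]
  constructor
  · rintro ⟨ht, h⟩; exact ⟨ht, by rwa [← key t ht]⟩
  · rintro ⟨ht, h⟩; exact ⟨ht, by rwa [key t ht]⟩
end

section
/- Let F be a normalized finite Orlicz function, and let (A_n)_{n∈ℕ} be pairwise disjoint Borel subsets of an interval I ⊆ ℝ (with Lebesgue measure) with 0 < |A_n| < ∞. Let s_n > 0 satisfy F(s_n)·|A_n| = 1 for every n. Then: (i) the functionals φ*_n(g) = (F(s_n)/s_n)·∫_{A_n} g dx are biorthogonal to the sequence φ_n = s_n·χ_{A_n}, i.e., φ*_m(φ_n) = δ_{mn}; (ii) for every finitely supported scalar sequence (a_n) and every t > 0 one has ∫_I F(|∑_n a_n s_n χ_{A_n}|/t) dx = ∑_n F(s_n|a_n|/t)/F(s_n); and consequently (iii) the Luxemburg norm of ∑_n a_n s_n χ_{A_n} in L_F(I) equals inf{t > 0 : ∑_n F(s_n|a_n|/t)/F(s_n) ≤ 1}, so (φ_n)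 is isometrically equivalent to the unit vector system of the Musielak–Orlicz sequence space associated with the flows (F_{s_n}). -/
open MeasureTheory Set

/-! On each `A n` the function `∑ aₙ sₙ χ_{A n}` takes the single value `a n * s n`, and it vanishes
off `⋃ A n`; since `F 0 = 0`, `F (|·| / t)` of it is again a step function on the disjoint `A n`,
whose integral over `I ⊇ A n` is `∑ F (s n |a n| / t) |A n|`. The normalisation
`F (s n) |A n| = 1` turns this into the Musielak–Orlicz modular, so the two Luxemburg infima are
taken over the same set, and biorthogonality is the same computation for a single set. -/

theorem Finset.sum_indicator_apply_of_mem_of_pairwise_disjoint {ι α M : Type*} [AddCommMonoid M]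
    {A : ι → Set α} (hA : Pairwise (Function.onFun Disjoint A)) {Λ : Finset ι} {m : ι}
    (hm : m ∈ Λ) {x : α} (hx : x ∈ A m) (f : ι → α → M) :
    ∑ n ∈ Λ, (A n).indicator (f n) x = f m x := by
  rw [Finset.sum_eq_single_of_mem m hm fun n _ hnm =>
    indicator_of_notMem (fun hxn => (hA hnm).le_bot ⟨hxn, hx⟩) _]
  exact indicator_of_mem hx _

theorem Finset.apply_sum_indicator_const_of_pairwise_disjoint {ι α M N : Type*}
    [AddCommMonoid M] [AddCommMonoid N] {A : ι → Set α} (hA : Pairwise (Function.onFun Disjoint A))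
    {g : M → N} (hg : g 0 = 0) (Λ : Finset ι) (c : ι → M) (x : α) :
    g (∑ n ∈ Λ, (A n).indicator (fun _ => c n) x) = ∑ n ∈ Λ, (A n).indicator (fun _ => g (c n)) x := by
  by_cases hx : ∃ m ∈ Λ, x ∈ A m
  · obtain ⟨m, hm, hxm⟩ := hx
    simp only [Finset.sum_indicator_apply_of_mem_of_pairwise_disjoint hA hm hxm]
  · push Not at hx
    simp only [Finset.sum_eq_zero fun n hn => indicator_of_notMem (hx n hn) _, hg]

theorem MeasureTheory.integral_finset_sum_indicator_const {α ι E : Type*} [MeasurableSpace α]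
    [NormedAddCommGroup E] [NormedSpace ℝ E] [CompleteSpace E] {μ : Measure α} {A : ι → Set α}
    (hA : ∀ n, MeasurableSet (A n)) (hfin : ∀ n, μ (A n) ≠ ⊤) (Λ : Finset ι) (b : ι → E) :
    ∫ x, ∑ n ∈ Λ, (A n).indicator (fun _ => b n) x ∂μ = ∑ n ∈ Λ, μ.real (A n) • b n := by
  rw [integral_finsetSum Λ fun n _ =>
    (integrable_indicator_iff (hA n)).2 (integrableOn_const (hfin n))]
  exact Finset.sum_congr rfl fun n _ => integral_indicator_const _ (hA n)

theorem statement11_general (F : ℝ → ℝ)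
    (hF0 : F 0 = 0)
    (I : Set ℝ)
    (A : ℕ → Set ℝ) (hmeas : ∀ n, MeasurableSet (A n)) (hsub : ∀ n, A n ⊆ I)
    (hdisj : Pairwise (Function.onFun Disjoint A))
    (s : ℕ → ℝ) (hs : ∀ n, 0 < s n)
    (hnorm1 : ∀ n, F (s n) * (volume (A n)).toReal = 1) :
    (∀ m n : ℕ,
      (F (s m) / s m) * (∫ x in A m, s n * (A n).indicator (fun _ => (1:ℝ)) x)
        = if m = n then 1 else 0) ∧
    (∀ (Λ : Finset ℕ) (a : ℕ → ℝ) (t : ℝ), 0 < t →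
      (∫ x in I, F (|∑ n ∈ Λ, a n * (s n * (A n).indicator (fun _ => (1:ℝ)) x)| / t))
        = ∑ n ∈ Λ, F (s n * |a n| / t) / F (s n)) ∧
    (∀ (Λ : Finset ℕ) (a : ℕ → ℝ),
      sInf {t : ℝ | 0 < t ∧
          (∫ x in I,
            F (|∑ n ∈ Λ, a n * (s n * (A n).indicator (fun _ => (1:ℝ)) x)| / t)) ≤ 1}
        = sInf {t : ℝ | 0 < t ∧ ∑ n ∈ Λ, F (s n * |a n| / t) / F (s n) ≤ 1}) := by
  have hvol : ∀ n, volume.real (A n) = (F (s n))⁻¹ := fun n =>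
    eq_inv_of_mul_eq_one_right (hnorm1 n)
  have hfin : ∀ n, volume.restrict I (A n) ≠ ⊤ := fun n =>
    ne_top_of_le_ne_top (fun htop => by simpa [htop] using hnorm1 n) (Measure.restrict_apply_le _ _)
  have hstep : ∀ (c : ℕ → ℝ) n x,
      c n * (s n * (A n).indicator (fun _ => (1:ℝ)) x) = (A n).indicator (fun _ => c n * s n) x := by
    intro c n x
    by_cases hx : x ∈ A n <;> simp [hx]
  have modular_eq : ∀ (Λ : Finset ℕ) (a : ℕ → ℝ) (t : ℝ), 0 < t →
      (∫ x in I, F (|∑ n ∈ Λ, a n * (s n * (A n).indicator (fun _ => (1:ℝ)) x)| / t))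
        = ∑ n ∈ Λ, F (s n * |a n| / t) / F (s n) := by
    intro Λ a t _
    simp only [hstep, Finset.apply_sum_indicator_const_of_pairwise_disjoint hdisj
      (g := fun y => F (|y| / t)) (by simpa using hF0),
      integral_finset_sum_indicator_const hmeas hfin, measureReal_restrict_apply (hmeas _),
      inter_eq_left.2 (hsub _), hvol, abs_mul, abs_of_pos (hs _), smul_eq_mul]
    exact Finset.sum_congr rfl fun n _ => by rw [mul_comm (|a n|)]; ring
  refine ⟨fun m n => ?_, modular_eq, fun Λ a => ?_⟩
  · rw [integral_const_mul, integral_indicator_const _ (hmeas n),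
      measureReal_restrict_apply (hmeas n), smul_eq_mul, mul_one]
    split_ifs with hmn
    · subst hmn
      rw [inter_self, hvol]
      field_simp [(hs m).ne', left_ne_zero_of_mul_eq_one (hnorm1 m)]
    · rw [(hdisj (Ne.symm hmn)).inter_eq, measureReal_empty, mul_zero, mul_zero]
  · congr 1
    ext t
    exact and_congr_right fun ht => by rw [modular_eq Λ a t ht]

/-- Let `F` be a normalized finite Orlicz function, `(A n)` pairwise disjoint
Borel subsets of an interval `I ⊆ ℝ` of finite positive Lebesgue measure, and `s n > 0` with
`F (s n) * |A n| = 1`. Then: (i) the functionals `g ↦ (F (s n) / s n) * ∫_{A n} g` are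
biorthogonal to `φ n = s n · χ_{A n}`; (ii) for every finitely supported scalars `a` and
`t > 0`, `∫_I F (|∑ a n s n χ_{A n}| / t) = ∑ F (s n |a n| / t) / F (s n)`; hence (iii) the
Luxemburg norm of `∑ a n s n χ_{A n}` in `L_F(I)` equals the Luxemburg norm of `a` in the
Musielak–Orlicz sequence space associated with the flows `(F_{s n})`. -/
theorem statement11 (F : ℝ → ℝ)
    (hFconv : ConvexOn ℝ (Ici (0:ℝ)) F) (hFmono : MonotoneOn F (Ici (0:ℝ)))
    (hF0 : F 0 = 0) (hFnonneg : ∀ t : ℝ, 0 ≤ t → 0 ≤ F t) (hF1 : F 1 = 1)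
    (I : Set ℝ) (hI : I.OrdConnected)
    (A : ℕ → Set ℝ) (hmeas : ∀ n, MeasurableSet (A n)) (hsub : ∀ n, A n ⊆ I)
    (hdisj : Pairwise (Function.onFun Disjoint A))
    (hpos : ∀ n, 0 < volume (A n)) (hfin : ∀ n, volume (A n) < ⊤)
    (s : ℕ → ℝ) (hs : ∀ n, 0 < s n)
    (hnorm1 : ∀ n, F (s n) * (volume (A n)).toReal = 1) :
    (∀ m n : ℕ,
      (F (s m) / s m) * (∫ x in A m, s n * (A n).indicator (fun _ => (1:ℝ)) x)
        = if m = n then 1 else 0) ∧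
    (∀ (Λ : Finset ℕ) (a : ℕ → ℝ) (t : ℝ), 0 < t →
      (∫ x in I, F (|∑ n ∈ Λ, a n * (s n * (A n).indicator (fun _ => (1:ℝ)) x)| / t))
        = ∑ n ∈ Λ, F (s n * |a n| / t) / F (s n)) ∧
    (∀ (Λ : Finset ℕ) (a : ℕ → ℝ),
      sInf {t : ℝ | 0 < t ∧
          (∫ x in I,
            F (|∑ n ∈ Λ, a n * (s n * (A n).indicator (fun _ => (1:ℝ)) x)| / t)) ≤ 1}
        = sInf {t : ℝ | 0 < t ∧ ∑ n ∈ Λ, F (s n * |a n| / t) / F (s n) ≤ 1}) :=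
  statement11_general F hF0 I A hmeas hsub hdisj s hs hnorm1
end

section
/- Let F be a normalized finite Orlicz function with F(s) > 0 for every s > 0. Suppose that for every t ≥ 0 the limit G(t) := lim_{s→∞} F(st)/F(s) exists and is finite. Then G is an Orlicz function (convex, nondecreasing, G(0) = 0), and E_F = C_F = {G|_{[0,1/2]}}; in particular, every H ∈ C_F satisfies H(t) = G(t) for all t ∈ [0,1/2], and the restriction of G to [0,1/2] belongs to E_F. -/
/-!
For `s > 0` the flow `F_s` is convex and nondecreasing on `[0, ∞)`, with `F_s 0 = 0` and
`F_s 1 = 1`; comparing slopes, all flows are `2`-Lipschitz on `[0, 1/2]`. By Arzelà–Ascoli the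
pointwise convergence `F_s → G` is therefore uniform on `[0, 1/2]`, so `G ∈ E_F`, and `G`
inherits convexity and monotonicity from the flows. An element of `C_F` is a uniform limit of
convex combinations of flows at arbitrarily large `s`; at each fixed `t` these all lie in a
small ball around `G t`, hence so does the combination, and the limit equals `G` on `[0, 1/2]`.
Thus `E_F ⊆ C_F ⊆ {G} ⊆ E_F`.
-/

open Set Filter Topology

/-- `G` belongs to `E_F = ⋂_{b ≥ 0} E_{F,b}`, where `E_{F,b}` is the closure, in the topology
of uniform convergence on `[0,1/2]`, of the set of flows `{F_s : s > b}`,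
`F_s (t) = F (s t) / F s`. (Only the values of `G` on `[0,1/2]` are relevant.) -/
def MemFlowClosure (F : ℝ → ℝ) (G : ℝ → ℝ) : Prop :=
  ∀ b : ℝ, 0 ≤ b → ∀ ε : ℝ, 0 < ε → ∃ s : ℝ, b < s ∧
    ∀ t ∈ Icc (0:ℝ) (1/2), |F (s * t) / F s - G t| ≤ ε

/-- `G` belongs to `C_F = ⋂_{b ≥ 0} C_{F,b}`, where `C_{F,b}` is the closure, in the topology
of uniform convergence on `[0,1/2]`, of the convex hull of the set of flows `{F_s : s > b}`. -/
def MemFlowConvexClosure (F : ℝ → ℝ) (G : ℝ → ℝ) : Prop :=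
  ∀ b : ℝ, 0 ≤ b → ∀ ε : ℝ, 0 < ε →
    ∃ (m : ℕ) (lam : Fin m → ℝ) (s : Fin m → ℝ),
      (∀ i, 0 ≤ lam i) ∧ (∑ i, lam i = 1) ∧ (∀ i, b < s i) ∧
      ∀ t ∈ Icc (0:ℝ) (1/2), |(∑ i, lam i * (F (s i * t) / F (s i))) - G t| ≤ ε

theorem ConvexOn.lipschitzOnWith_Icc_of_monotoneOn {f : ℝ → ℝ} {lo a b : ℝ} {K : NNReal}
    (hconv : ConvexOn ℝ (Icc lo b) f) (hmono : MonotoneOn f (Icc lo b)) (hab : a < b)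
    (hK : (f b - f lo) / (b - a) ≤ K) : LipschitzOnWith K f (Icc lo a) := by
  have hsub : Icc lo a ⊆ Icc lo b := Icc_subset_Icc_right hab.le
  refine LipschitzOnWith.of_dist_le_mul fun x hx y hy => ?_
  wlog hxy : x ≤ y generalizing x y
  · rw [dist_comm, dist_comm x]
    exact this y hy x hx (le_of_not_ge hxy)
  rw [dist_comm, Real.dist_eq, Real.dist_eq,
    abs_of_nonneg (sub_nonneg.2 (hmono (hsub hx) (hsub hy) hxy)),
    abs_of_nonpos (sub_nonpos.2 hxy), neg_sub]
  rcases hxy.eq_or_lt with rfl | hxy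
  · simp
  have hlo : lo ∈ Icc lo b := left_mem_Icc.2 (hx.1.trans (hx.2.trans hab.le))
  have hb : b ∈ Icc lo b := right_mem_Icc.2 hlo.2
  have hslope : (f y - f x) / (y - x) ≤ (f b - f y) / (b - y) :=
    hconv.slope_mono_adjacent (hsub hx) hb hxy (hy.2.trans_lt hab)
  have hslope_le : (f b - f y) / (b - y) ≤ (f b - f lo) / (b - a) :=
    div_le_div₀ (sub_nonneg.2 (hmono hlo hb hlo.2)) (by linarith [hmono hlo (hsub hy) hy.1])
      (sub_pos.2 hab) (by linarith [hy.2])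
  rw [← div_le_iff₀ (sub_pos.2 hxy)]
  exact hslope.trans (hslope_le.trans hK)

theorem convexOn_of_frequently_convexOn_of_tendsto {ι E : Type*} [AddCommGroup E] [Module ℝ E]
    {l : Filter ι} {F : ι → E → ℝ} {f : E → ℝ} {s : Set E}
    (hF : ∃ᶠ i in l, ConvexOn ℝ s (F i)) (hlim : ∀ x ∈ s, Tendsto (F · x) l (𝓝 (f x))) :
    ConvexOn ℝ s f := by
  obtain ⟨i, hi⟩ := hF.exists
  refine ⟨hi.1, fun x hx y hy a b ha hb hab => ?_⟩
  exact le_of_tendsto_of_tendsto_of_frequently (hlim _ (hi.1 hx hy ha hb hab))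
    (((hlim x hx).const_smul a).add ((hlim y hy).const_smul b))
    (hF.mono fun _ hF => hF.2 hx hy ha hb hab)

theorem tendstoUniformlyOn_of_lipschitzOnWith {ι α β : Type*} [PseudoMetricSpace α]
    [PseudoMetricSpace β] {l : Filter ι} {f : ι → α → β} {g : α → β} {s : Set α} {K : NNReal}
    (hs : IsCompact s) (hf : ∀ i, LipschitzOnWith K (f i) s)
    (hlim : ∀ x ∈ s, Tendsto (f · x) l (𝓝 (g x))) : TendstoUniformlyOn f g l s := by
  have hequi : EquicontinuousOn f s :=
    (LipschitzOnWith.uniformEquicontinuousOn f K hf).equicontinuousOn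
  have hpi := (EquicontinuousOn.tendsto_uniformOnFun_iff_pi' (𝔖 := {s}) (by simpa using hs)
    (by simpa using hequi) l g).2 ?_
  · exact UniformOnFun.tendsto_iff_tendstoUniformlyOn.1 hpi s rfl
  · rw [tendsto_pi_nhds]
    rintro ⟨x, hx⟩
    simpa using hlim x (by simpa using hx)

/-- The flow `F_s` of `F` at `s`. -/
noncomputable def flow (F : ℝ → ℝ) (s t : ℝ) : ℝ := F (s * t) / F s

section Flow

variable {F : ℝ → ℝ} {s : ℝ}

theorem flow_apply_zero (hF0 : F 0 = 0) : flow F s 0 = 0 := by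
  simp [flow, hF0]

theorem flow_apply_one (hs : F s ≠ 0) : flow F s 1 = 1 := by
  simp [flow, hs]

theorem convexOn_flow (hF : ConvexOn ℝ (Ici 0) F) (hs : 0 ≤ s) (hFs : 0 < F s) :
    ConvexOn ℝ (Ici 0) (flow F s) := by
  refine ⟨convex_Ici 0, fun x hx y hy a b ha hb hab => ?_⟩
  have hxs : s * x ∈ Ici 0 := mul_nonneg hs hx
  have hys : s * y ∈ Ici 0 := mul_nonneg hs hy
  have hconv := hF.2 hxs hys ha hb hab
  simp only [smul_eq_mul, flow] at hconv ⊢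
  calc F (s * (a * x + b * y)) / F s = F (a * (s * x) + b * (s * y)) / F s := by
        congr 2; ring
    _ ≤ (a * F (s * x) + b * F (s * y)) / F s := div_le_div_of_nonneg_right hconv hFs.le
    _ = a * (F (s * x) / F s) + b * (F (s * y) / F s) := by ring

theorem monotoneOn_flow (hF : MonotoneOn F (Ici 0)) (hs : 0 ≤ s) (hFs : 0 < F s) :
    MonotoneOn (flow F s) (Ici 0) := fun _ hx _ hy hxy =>
  div_le_div_of_nonneg_right (hF (mul_nonneg hs hx) (mul_nonneg hs hy)
    (mul_le_mul_of_nonneg_left hxy hs)) hFs.le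

theorem lipschitzOnWith_flow (hFconv : ConvexOn ℝ (Ici 0) F) (hFmono : MonotoneOn F (Ici 0))
    (hF0 : F 0 = 0) (hs : 0 ≤ s) (hFs : 0 < F s) :
    LipschitzOnWith 2 (flow F s) (Icc 0 (1 / 2)) :=
  ((convexOn_flow hFconv hs hFs).subset Icc_subset_Ici_self (convex_Icc 0 1))
    |>.lipschitzOnWith_Icc_of_monotoneOn
      ((monotoneOn_flow hFmono hs hFs).mono Icc_subset_Ici_self) (by norm_num)
      (by norm_num [flow_apply_zero hF0, flow_apply_one hFs.ne'])

end Flow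

theorem MemFlowClosure.memFlowConvexClosure {F H : ℝ → ℝ} (hH : MemFlowClosure F H) :
    MemFlowConvexClosure F H := by
  intro b hb ε hε
  obtain ⟨s, hbs, hclose⟩ := hH b hb ε hε
  exact ⟨1, fun _ => 1, fun _ => s, fun _ => zero_le_one, by simp, fun _ => hbs,
    fun t ht => by simpa using hclose t ht⟩

theorem MemFlowClosure.congr {F G H : ℝ → ℝ} (hG : MemFlowClosure F G)
    (hGH : EqOn G H (Icc 0 (1 / 2))) : MemFlowClosure F H := by
  intro b hb ε hε
  obtain ⟨s, hbs, hclose⟩ := hG b hb ε hε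
  exact ⟨s, hbs, fun t ht => hGH ht ▸ hclose t ht⟩

theorem MemFlowClosure.of_tendstoUniformlyOn {F G : ℝ → ℝ}
    (h : TendstoUniformlyOn (flow F) G atTop (Icc 0 (1 / 2))) : MemFlowClosure F G := by
  intro b _ ε hε
  obtain ⟨s, hbs, hclose⟩ :=
    ((eventually_gt_atTop b).and (Metric.tendstoUniformlyOn_iff.1 h ε hε)).exists
  refine ⟨s, hbs, fun t ht => ?_⟩
  rw [← Real.dist_eq, dist_comm]
  exact (hclose t ht).le

theorem tendstoUniformlyOn_flow {F G : ℝ → ℝ} (hFconv : ConvexOn ℝ (Ici 0) F)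
    (hFmono : MonotoneOn F (Ici 0)) (hF0 : F 0 = 0) (hFpos : ∀ s, 0 < s → 0 < F s)
    (hG : ∀ t, 0 ≤ t → Tendsto (flow F · t) atTop (𝓝 (G t))) :
    TendstoUniformlyOn (flow F) G atTop (Icc 0 (1 / 2)) := by
  -- The flows at `s > 0` are uniformly `2`-Lipschitz, so Ascoli upgrades pointwise convergence.
  have hIoi : TendstoUniformlyOn (fun s : Ioi (0 : ℝ) => flow F s) G atTop (Icc 0 (1 / 2)) :=
    tendstoUniformlyOn_of_lipschitzOnWith isCompact_Icc
      (fun s => lipschitzOnWith_flow hFconv hFmono hF0 s.2.le (hFpos s s.2))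
      (fun t ht => tendsto_comp_val_Ioi_atTop.2 (hG t ht.1))
  rw [← map_val_Ioi_atTop 0]
  exact hIoi

theorem MemFlowConvexClosure.eqOn {F G H : ℝ → ℝ} (hH : MemFlowConvexClosure F H)
    (hG : ∀ t, 0 ≤ t → Tendsto (flow F · t) atTop (𝓝 (G t))) :
    EqOn H G (Icc 0 (1 / 2)) := by
  intro t ht
  refine eq_of_forall_dist_le fun ε hε => ?_
  obtain ⟨b, hb⟩ := eventually_atTop.1 <|
    (hG t ht.1).eventually (Metric.closedBall_mem_nhds (G t) (half_pos hε))
  obtain ⟨m, lam, s, hlam, hsum, hbs, hclose⟩ := hH (max b 0) (le_max_right _ _) _ (half_pos hε)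
  have hmix : ∑ i, lam i * flow F (s i) t ∈ Metric.closedBall (G t) (ε / 2) :=
    (convex_closedBall _ _).sum_mem (fun i _ => hlam i) hsum
      fun i _ => hb (s i) ((le_max_left _ _).trans (hbs i).le)
  calc dist (H t) (G t) ≤ dist (H t) (∑ i, lam i * flow F (s i) t)
        + dist (∑ i, lam i * flow F (s i) t) (G t) := dist_triangle _ _ _
    _ ≤ ε / 2 + ε / 2 := by
        gcongr
        · rw [dist_comm, Real.dist_eq]; exact hclose t ht
        · exact hmix
    _ = ε := add_halves ε

theorem statement12_general (F : ℝ → ℝ)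
    (hFconv : ConvexOn ℝ (Ici (0:ℝ)) F) (hFmono : MonotoneOn F (Ici (0:ℝ)))
    (hF0 : F 0 = 0)
    (hFpos : ∀ s : ℝ, 0 < s → 0 < F s)
    (G : ℝ → ℝ)
    (hG : ∀ t : ℝ, 0 ≤ t → Tendsto (fun s : ℝ => F (s * t) / F s) atTop (𝓝 (G t))) :
    (ConvexOn ℝ (Ici (0:ℝ)) G ∧ MonotoneOn G (Ici (0:ℝ)) ∧ G 0 = 0) ∧
    (∀ H : ℝ → ℝ, (MemFlowClosure F H ↔ MemFlowConvexClosure F H)) ∧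
    (∀ H : ℝ → ℝ, MemFlowConvexClosure F H → ∀ t ∈ Icc (0:ℝ) (1/2), H t = G t) ∧
    MemFlowClosure F G := by
  have hGE : MemFlowClosure F G :=
    .of_tendstoUniformlyOn (tendstoUniformlyOn_flow hFconv hFmono hF0 hFpos hG)
  have hCG (H : ℝ → ℝ) (hH : MemFlowConvexClosure F H) : EqOn H G (Icc 0 (1 / 2)) :=
    hH.eqOn hG
  have hpos : ∀ᶠ s : ℝ in atTop, 0 < s := eventually_gt_atTop 0
  refine ⟨⟨?_, ?_, ?_⟩, fun H => ⟨MemFlowClosure.memFlowConvexClosure,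
    fun hH => hGE.congr (hCG H hH).symm⟩, hCG, hGE⟩
  · exact convexOn_of_frequently_convexOn_of_tendsto
      (hpos.mono fun s hs => convexOn_flow hFconv hs.le (hFpos s hs)).frequently hG
  · exact monotoneOn_of_frequently_monotoneOn_of_tendsto
      (hpos.mono fun s hs => monotoneOn_flow hFmono hs.le (hFpos s hs)).frequently hG
  · exact tendsto_nhds_unique (hG 0 le_rfl) (by simp [hF0])

/-- Let `F` be a normalized finite Orlicz function with `F s > 0` for `s > 0`.
If `G t := lim_{s → ∞} F (s t) / F s` exists and is finite for every `t ≥ 0`, then `G` is an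
Orlicz function (convex, nondecreasing, `G 0 = 0`) and `E_F = C_F = {G|_{[0,1/2]}}`: every
`H ∈ C_F` coincides with `G` on `[0,1/2]`, and `G` itself belongs to `E_F`. -/
theorem statement12 (F : ℝ → ℝ)
    (hFconv : ConvexOn ℝ (Ici (0:ℝ)) F) (hFmono : MonotoneOn F (Ici (0:ℝ)))
    (hF0 : F 0 = 0) (hF1 : F 1 = 1)
    (hFpos : ∀ s : ℝ, 0 < s → 0 < F s)
    (G : ℝ → ℝ)
    (hG : ∀ t : ℝ, 0 ≤ t → Tendsto (fun s : ℝ => F (s * t) / F s) atTop (𝓝 (G t))) :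
    (ConvexOn ℝ (Ici (0:ℝ)) G ∧ MonotoneOn G (Ici (0:ℝ)) ∧ G 0 = 0) ∧
    (∀ H : ℝ → ℝ, (MemFlowClosure F H ↔ MemFlowConvexClosure F H)) ∧
    (∀ H : ℝ → ℝ, MemFlowConvexClosure F H → ∀ t ∈ Icc (0:ℝ) (1/2), H t = G t) ∧
    MemFlowClosure F G :=
  statement12_general F hFconv hFmono hF0 hFpos G hG
end
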